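/- arXiv:1609.06615 — 2 statements merged into one kernel-verified Lean document; each statement's English description precedes it below -/
import Mathlib

section
/- Let A be an n×n complex matrix (n ≥ 1) and p ∈ [1, ∞). Then the identity matrix I is Birkhoff–James orthogonal to A with respect to the Schatten p-norm, i.e. ‖I‖ₚ ≤ ‖I + γ·A‖ₚ for all γ ∈ ℂ (note ‖I‖ₚ = n^{1/p}), if and only if tr(A) = 0. -/
open Matrix ComplexOrder

/-- The square root of a positive semidefinite matrix (as defined in older Mathlib). -/
noncomputable def Matrix.PosSemidef.sqrt {n : Type*} [Fintype n] [DecidableEq n]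
    {A : Matrix n n ℂ} (hA : A.PosSemidef) : Matrix n n ℂ :=
  (hA.1.eigenvectorUnitary : Matrix n n ℂ) * diagonal (fun i => ((√(hA.1.eigenvalues i) : ℝ) : ℂ)) *
    (star hA.1.eigenvectorUnitary : Matrix n n ℂ)

theorem Matrix.PosSemidef.posSemidef_sqrt {n : Type*} [Fintype n] [DecidableEq n]
    {A : Matrix n n ℂ} (hA : A.PosSemidef) : PosSemidef hA.sqrt := by
  unfold Matrix.PosSemidef.sqrt
  have h := (posSemidef_diagonal_iff (d := (fun i => ((√(hA.1.eigenvalues i) : ℝ) : ℂ)))).2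
    (fun i => by simp [Real.sqrt_nonneg])
  simpa [star_eq_conjTranspose] using h.mul_mul_conjTranspose_same (hA.1.eigenvectorUnitary : Matrix n n ℂ)

/-- The absolute value `|A| = (AᴴA)^(1/2)` of a complex matrix `A`. -/
noncomputable def matAbs {n : ℕ} (A : Matrix (Fin n) (Fin n) ℂ) : Matrix (Fin n) (Fin n) ℂ :=
  (Matrix.posSemidef_conjTranspose_mul_self A).sqrt

/-- The Schatten `p`-norm `‖A‖ₚ = (tr |A|^p)^(1/p)`, computed via the eigenvalues of `|A|`. -/
noncomputable def schattenNorm {n : ℕ} (p : ℝ) (A : Matrix (Fin n) (Fin n) ℂ) : ℝ :=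
  (∑ i, ((Matrix.posSemidef_conjTranspose_mul_self A).posSemidef_sqrt.1.eigenvalues i) ^ p) ^ (1 / p)

/-!
Write `σᵢ(B)` for the singular values of `B`, so that `‖B‖ₚᵖ = ∑ σᵢ(B)ᵖ` and `‖I‖ₚᵖ = n`.

If `tr A = 0`, then `n = tr (I + γA)` is at most the nuclear norm `∑ σᵢ`, and Bernoulli's
inequality upgrades `n ≤ ∑ σᵢ` to `n ≤ ∑ σᵢᵖ`.

Conversely, fix an integer `m` with `p ≤ 2m`. By concavity of `x ↦ x ^ (p / 2m)`, the inequality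
`n ≤ ∑ σᵢᵖ` forces `n ≤ ∑ σᵢ ^ 2m = Re tr ((BᴴB)ᵐ)`. For `B = I + tX` the right-hand side is a
differentiable function of `t ∈ ℝ` with value `n` at `t = 0`, so orthogonality makes `t = 0` a
minimum and the derivative `2m · Re tr X` vanishes. Taking `X = conj (tr A) • A` gives
`|tr A|² = 0`.
-/

open scoped InnerProductSpace

theorem Real.card_le_sum_rpow_of_card_le_sum_rpow {ι : Type*} [Fintype ι] {x : ι → ℝ}
    (hx : ∀ i, 0 ≤ x i) {p r : ℝ} (hp : 0 < p) (hpr : p ≤ r)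
    (h : (Fintype.card ι : ℝ) ≤ ∑ i, x i ^ p) : (Fintype.card ι : ℝ) ≤ ∑ i, x i ^ r := by
  have hr : 0 < r := hp.trans_le hpr
  have hconc : ∀ i, x i ^ p ≤ 1 + p / r * (x i ^ r - 1) := fun i => by
    have := rpow_one_add_le_one_add_mul_self (s := x i ^ r - 1)
      (by linarith [rpow_nonneg (hx i) r]) (div_nonneg hp.le hr.le) ((div_le_one hr).2 hpr)
    rwa [add_sub_cancel, ← rpow_mul (hx i), mul_div_cancel₀ _ hr.ne'] at this
  have hsum : ∑ i, x i ^ p ≤ Fintype.card ι + p / r * (∑ i, x i ^ r - Fintype.card ι) := by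
    calc ∑ i, x i ^ p ≤ ∑ i, (1 + p / r * (x i ^ r - 1)) := Finset.sum_le_sum fun i _ => hconc i
      _ = _ := by simp [Finset.sum_add_distrib, ← Finset.mul_sum]
  have hgap : 0 ≤ p / r * (∑ i, x i ^ r - Fintype.card ι) := by linarith
  linarith [(mul_nonneg_iff_of_pos_left (div_pos hp hr)).1 hgap]

namespace Matrix

section Spectral

variable {ι 𝕜 : Type*} [Fintype ι] [DecidableEq ι] [RCLike 𝕜]

theorem trace_conjStarAlgAut (U : unitaryGroup ι 𝕜) (X : Matrix ι ι 𝕜) :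
    (Unitary.conjStarAlgAut 𝕜 _ U X).trace = X.trace := by
  rw [Unitary.conjStarAlgAut_apply, trace_mul_cycle, Unitary.coe_star_mul_self, one_mul]

theorem IsHermitian.trace_pow {S : Matrix ι ι 𝕜} (hS : S.IsHermitian) (k : ℕ) :
    (S ^ k).trace = ∑ i, ((hS.eigenvalues i ^ k : ℝ) : 𝕜) := by
  conv_lhs => rw [hS.spectral_theorem]
  rw [← map_pow, trace_conjStarAlgAut, diagonal_pow, trace_diagonal]
  simp

theorem IsHermitian.eigenvalues_eq_one {S : Matrix ι ι 𝕜} (hS : S.IsHermitian) (h : S = 1)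
    (i : ι) : hS.eigenvalues i = 1 := by
  have : Nonempty ι := ⟨i⟩
  subst h
  simpa [spectrum.one_eq] using hS.eigenvalues_mem_spectrum_real i

theorem PosSemidef.sqrt_mul_self {A : Matrix ι ι ℂ} (hA : A.PosSemidef) :
    hA.sqrt * hA.sqrt = A := by
  conv_rhs => rw [hA.1.spectral_theorem]
  rw [PosSemidef.sqrt, ← Unitary.conjStarAlgAut_apply (S := ℂ), ← map_mul, diagonal_mul_diagonal]
  congr 2
  ext i
  simp [← Complex.ofReal_mul, Real.mul_self_sqrt (hA.eigenvalues_nonneg i)]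

theorem PosSemidef.sqrt_eq_one {A : Matrix ι ι ℂ} (hA : A.PosSemidef) (h : A = 1) :
    hA.sqrt = 1 := by
  simp [PosSemidef.sqrt, hA.1.eigenvalues_eq_one h]

end Spectral

section SingularValues

variable {ι : Type*} [Fintype ι] [DecidableEq ι]

theorem norm_toEuclideanLin_eigenvectorBasis {B S : Matrix ι ι ℂ} (hS : S.PosSemidef)
    (hSB : S * S = Bᴴ * B) (i : ι) :
    ‖toEuclideanLin B (hS.1.eigenvectorBasis i)‖ = hS.1.eigenvalues i := by
  set u := hS.1.eigenvectorBasis i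
  have hSu : toEuclideanLin S u = (hS.1.eigenvalues i : ℂ) • u := by
    ext j
    simpa using congrFun (hS.1.mulVec_eigenvectorBasis i) j
  have hu : ‖u‖ = 1 := hS.1.eigenvectorBasis.orthonormal.1 i
  have hsq : ‖toEuclideanLin B u‖ ^ 2 = hS.1.eigenvalues i ^ 2 := by
    rw [← RCLike.ofReal_inj (K := ℂ), RCLike.ofReal_pow, ← inner_self_eq_norm_sq_to_K,
      ← LinearMap.adjoint_inner_right, ← toEuclideanLin_conjTranspose_eq_adjoint,
      ← LinearMap.comp_apply, ← toLpLin_mul_same, ← hSB, toLpLin_mul_same, LinearMap.comp_apply,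
      hSu, map_smul, hSu, inner_smul_right, inner_smul_right, inner_self_eq_norm_sq_to_K, hu]
    simp [sq]
  exact (pow_left_inj₀ (norm_nonneg _) (hS.eigenvalues_nonneg i) two_ne_zero).1 hsq

theorem trace_toEuclideanLin (B : Matrix ι ι ℂ) :
    LinearMap.trace ℂ _ (toEuclideanLin B) = B.trace := by
  rw [toEuclideanLin, toLpLin_eq_toLin, LinearMap.trace_eq_matrix_trace ℂ (PiLp.basisFun 2 ℂ ι),
    LinearMap.toMatrix_toLin]

noncomputable def singularValues (B : Matrix ι ι ℂ) : ι → ℝ :=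
  (posSemidef_conjTranspose_mul_self B).posSemidef_sqrt.1.eigenvalues

theorem singularValues_nonneg (B : Matrix ι ι ℂ) (i : ι) : 0 ≤ singularValues B i :=
  (posSemidef_conjTranspose_mul_self B).posSemidef_sqrt.eigenvalues_nonneg i

theorem singularValues_one : singularValues (1 : Matrix ι ι ℂ) = 1 := by
  ext i
  exact IsHermitian.eigenvalues_eq_one _ (PosSemidef.sqrt_eq_one _ (by simp)) i

theorem trace_gram_pow (B : Matrix ι ι ℂ) (k : ℕ) :
    ((Bᴴ * B) ^ k).trace = ((∑ i, singularValues B i ^ (2 * k) : ℝ) : ℂ) := by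
  have hM := posSemidef_conjTranspose_mul_self B
  rw [← hM.sqrt_mul_self, ← sq, ← pow_mul, hM.posSemidef_sqrt.1.trace_pow]
  push_cast
  rfl

theorem norm_trace_le_sum_singularValues (B : Matrix ι ι ℂ) :
    ‖B.trace‖ ≤ ∑ i, singularValues B i := by
  have hM := posSemidef_conjTranspose_mul_self B
  set b := hM.posSemidef_sqrt.1.eigenvectorBasis
  calc ‖B.trace‖ = ‖∑ i, ⟪b i, toEuclideanLin B (b i)⟫_ℂ‖ := by
        rw [← LinearMap.trace_eq_sum_inner, trace_toEuclideanLin]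
    _ ≤ ∑ i, ‖toEuclideanLin B (b i)‖ := by
        refine (norm_sum_le _ _).trans (Finset.sum_le_sum fun i _ => ?_)
        simpa [b.orthonormal.1 i] using
          norm_inner_le_norm (𝕜 := ℂ) (b i) (toEuclideanLin B (b i))
    _ = ∑ i, singularValues B i := Finset.sum_congr rfl fun i _ =>
        norm_toEuclideanLin_eigenvectorBasis hM.posSemidef_sqrt hM.sqrt_mul_self i

end SingularValues

section Derivative

-- Derivatives are taken entrywise, which avoids putting a norm on matrices.
variable {ι : Type*} [Fintype ι] {x : ℝ}

theorem hasDerivAt_mul_apply {A B : ℝ → Matrix ι ι ℂ} {A' B' : Matrix ι ι ℂ}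
    (hA : ∀ i j, HasDerivAt (fun t => A t i j) (A' i j) x)
    (hB : ∀ i j, HasDerivAt (fun t => B t i j) (B' i j) x) (i j : ι) :
    HasDerivAt (fun t => (A t * B t) i j) ((A' * B x + A x * B') i j) x := by
  simp only [mul_apply, add_apply, ← Finset.sum_add_distrib]
  exact HasDerivAt.fun_sum fun k _ => (hA i k).mul (hB k j)

theorem hasDerivAt_pow_apply_of_eq_one [DecidableEq ι] {A : ℝ → Matrix ι ι ℂ}
    {A' : Matrix ι ι ℂ} (hA : ∀ i j, HasDerivAt (fun t => A t i j) (A' i j) x) (hA₁ : A x = 1)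
    (m : ℕ) (i j : ι) :
    HasDerivAt (fun t => (A t ^ m) i j) ((m • A') i j) x := by
  induction m generalizing i j with
  | zero => simpa using hasDerivAt_const x ((1 : Matrix ι ι ℂ) i j)
  | succ m ih =>
    simpa only [pow_succ, hA₁, one_pow, mul_one, one_mul, succ_nsmul] using
      hasDerivAt_mul_apply ih hA i j

theorem hasDerivAt_re_trace_gram_pow [DecidableEq ι] (X : Matrix ι ι ℂ) (m : ℕ) :
    HasDerivAt (fun t : ℝ => (((1 + t • X)ᴴ * (1 + t • X)) ^ m).trace.re)
      (2 * m * X.trace.re) 0 := by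
  have hline (Y : Matrix ι ι ℂ) (i j : ι) :
      HasDerivAt (fun t : ℝ => (1 + t • Y) i j) (Y i j) 0 := by
    simpa using ((hasDerivAt_id (0 : ℝ)).smul_const (Y i j)).const_add ((1 : Matrix ι ι ℂ) i j)
  have hgram (i j : ι) :
      HasDerivAt (fun t : ℝ => ((1 + t • X)ᴴ * (1 + t • X) : Matrix ι ι ℂ) i j)
      ((Xᴴ + X) i j) 0 := by
    simpa [conjTranspose_add, conjTranspose_smul] using
      hasDerivAt_mul_apply (hline Xᴴ) (hline X) i j
  have htrace := HasDerivAt.fun_sum fun i (_ : i ∈ Finset.univ) =>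
    hasDerivAt_pow_apply_of_eq_one hgram (by simp) m i i
  refine (Complex.reCLM.hasFDerivAt.comp_hasDerivAt (0 : ℝ) htrace).congr_deriv ?_
  change ((m • (Xᴴ + X)).trace).re = _
  rw [trace_smul, trace_add, trace_conjTranspose]
  simp
  ring

end Derivative

end Matrix

open Matrix

theorem schattenNorm_eq {n : ℕ} (p : ℝ) (B : Matrix (Fin n) (Fin n) ℂ) :
    schattenNorm p B = (∑ i, singularValues B i ^ p) ^ (1 / p) := rfl

theorem schattenNorm_one_le_iff {n : ℕ} {p : ℝ} (hp : 0 < p) (B : Matrix (Fin n) (Fin n) ℂ) :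
    schattenNorm p (1 : Matrix (Fin n) (Fin n) ℂ) ≤ schattenNorm p B ↔
      (n : ℝ) ≤ ∑ i, singularValues B i ^ p := by
  rw [schattenNorm_eq, schattenNorm_eq, singularValues_one]
  simp only [Pi.one_apply, Real.one_rpow, Finset.sum_const, Finset.card_univ, Fintype.card_fin,
    nsmul_eq_mul, mul_one]
  exact Real.rpow_le_rpow_iff (Nat.cast_nonneg n)
    (Finset.sum_nonneg fun i _ => Real.rpow_nonneg (singularValues_nonneg B i) p) (by positivity)

theorem re_trace_eq_zero_of_forall_schattenNorm_one_le {n : ℕ} {p : ℝ} (hp : 0 < p)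
    (X : Matrix (Fin n) (Fin n) ℂ)
    (h : ∀ t : ℝ, schattenNorm p (1 : Matrix (Fin n) (Fin n) ℂ) ≤ schattenNorm p (1 + t • X)) :
    X.trace.re = 0 := by
  obtain ⟨m, hm⟩ : ∃ m : ℕ, p ≤ 2 * m :=
    ⟨⌈p⌉₊, by linarith [Nat.le_ceil p, (Nat.cast_nonneg ⌈p⌉₊ : (0 : ℝ) ≤ ⌈p⌉₊)]⟩
  have hm₀ : (m : ℝ) ≠ 0 := by linarith
  have hmin : IsLocalMin (fun t : ℝ => (((1 + t • X)ᴴ * (1 + t • X)) ^ m).trace.re) 0 :=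
    Filter.Eventually.of_forall fun t => by
      have hσ := Real.card_le_sum_rpow_of_card_le_sum_rpow (singularValues_nonneg (1 + t • X))
        hp hm (by simpa using (schattenNorm_one_le_iff hp _).1 (h t))
      simp only [trace_gram_pow, Complex.ofReal_re, zero_smul, add_zero, singularValues_one]
      simpa [← Real.rpow_natCast] using hσ
  simpa [hm₀] using hmin.hasDerivAt_eq_zero (hasDerivAt_re_trace_gram_pow X m)

theorem schattenNorm_one_le_of_trace_eq {n : ℕ} {p : ℝ} (hp : 1 ≤ p)
    (B : Matrix (Fin n) (Fin n) ℂ) (hB : B.trace = n) :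
    schattenNorm p (1 : Matrix (Fin n) (Fin n) ℂ) ≤ schattenNorm p B := by
  have h := norm_trace_le_sum_singularValues B
  rw [hB, Complex.norm_natCast] at h
  rw [schattenNorm_one_le_iff (by linarith)]
  simpa using Real.card_le_sum_rpow_of_card_le_sum_rpow (singularValues_nonneg B) one_pos hp
    (by simpa using h)

theorem identity_bj_orthogonal_iff_trace_eq_zero_general {n : ℕ} (p : ℝ) (hp : 1 ≤ p)
    (A : Matrix (Fin n) (Fin n) ℂ) :
    (∀ γ : ℂ, schattenNorm p (1 : Matrix (Fin n) (Fin n) ℂ) ≤ schattenNorm p (1 + γ • A)) ↔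
      A.trace = 0 := by
  constructor
  · intro h
    have hre := re_trace_eq_zero_of_forall_schattenNorm_one_le (by linarith)
      (star A.trace • A) fun t => by
        simpa only [← smul_assoc, Complex.real_smul] using h (t * star A.trace)
    rwa [trace_smul, smul_eq_mul, Complex.star_def, ← Complex.normSq_eq_conj_mul_self,
      Complex.ofReal_re, Complex.normSq_eq_zero] at hre
  · intro hA γ
    refine schattenNorm_one_le_of_trace_eq hp _ ?_
    rw [trace_add, trace_smul, hA, smul_zero, add_zero, trace_one, Fintype.card_fin]

theorem identity_bj_orthogonal_iff_trace_eq_zero {n : ℕ} (hn : 1 ≤ n) (p : ℝ) (hp : 1 ≤ p)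
    (A : Matrix (Fin n) (Fin n) ℂ) :
    (∀ γ : ℂ, schattenNorm p (1 : Matrix (Fin n) (Fin n) ℂ) ≤ schattenNorm p (1 + γ • A)) ↔
      A.trace = 0 :=
  identity_bj_orthogonal_iff_trace_eq_zero_general p hp A
end

section
/- Let H be a nonzero complex Hilbert space and A a bounded linear operator on H. Then A is norm-parallel to the identity operator I, i.e. there exists λ ∈ ℂ with |λ| = 1 such that ‖A + λ·I‖ = ‖A‖ + 1, if and only if ‖A‖ = w(A), where w(A) = sup{ |⟨Ax, x⟩| : x ∈ H, ‖x‖ = 1 } is the numerical radius of A. -/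
/-!
For a unit vector `x` and `|λ| = 1`, `‖(A + λ) x‖² = ‖A x‖² + 2 Re (λ ⟪A x, x⟫) + 1`, so
`‖A + λ‖² ≤ ‖A‖² + 2 w(A) + 1`; if `‖A + λ‖ = ‖A‖ + 1` this forces `‖A‖ ≤ w(A)`.
Conversely `⟪(A + λ) x, x⟫ = ⟪A x, x⟫ + λ̄`, and choosing `λ̄` in the direction of `⟪A x, x⟫`
gives `‖A + λ‖ ≥ |⟪A x, x⟫| + 1`. A maximiser of `λ ↦ ‖A + λ‖` on the unit circle therefore
satisfies `‖A + λ‖ ≥ w(A) + 1 = ‖A‖ + 1`, and the triangle inequality gives equality.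
-/

/-- The numerical radius of a bounded linear operator on a complex Hilbert space. -/
noncomputable def numRadius {H : Type*} [NormedAddCommGroup H] [InnerProductSpace ℂ H]
    (A : H →L[ℂ] H) : ℝ :=
  sSup {r : ℝ | ∃ x : H, ‖x‖ = 1 ∧ r = ‖(inner ℂ (A x) x : ℂ)‖}

open ComplexConjugate

theorem exists_norm_eq_one_norm_add_eq {E : Type*} [NormedAddCommGroup E] [NormedSpace ℝ E]
    [Nontrivial E] (x : E) : ∃ u : E, ‖u‖ = 1 ∧ ‖x + u‖ = ‖x‖ + 1 := by
  by_cases hx : x = 0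
  · obtain ⟨u, hu⟩ := exists_norm_eq E zero_le_one
    exact ⟨u, hu, by simp [hx, hu]⟩
  · have hu : ‖‖x‖⁻¹ • x‖ = 1 := by
      rw [norm_smul, norm_inv, norm_norm, inv_mul_cancel₀ (norm_ne_zero_iff.2 hx)]
    refine ⟨‖x‖⁻¹ • x, hu, ?_⟩
    rw [(SameRay.sameRay_nonneg_smul_right x (inv_nonneg.2 (norm_nonneg x))).norm_add, hu]

namespace ContinuousLinearMap

variable {H : Type*} [NormedAddCommGroup H] [InnerProductSpace ℂ H] (A : H →L[ℂ] H)

theorem norm_inner_apply_self_le_opNorm {x : H} (hx : ‖x‖ = 1) :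
    ‖(inner ℂ (A x) x : ℂ)‖ ≤ ‖A‖ :=
  calc ‖(inner ℂ (A x) x : ℂ)‖ ≤ ‖A x‖ * ‖x‖ := norm_inner_le_norm _ _
    _ ≤ ‖A‖ * ‖x‖ * ‖x‖ := by gcongr; exact A.le_opNorm x
    _ = ‖A‖ := by rw [hx, mul_one, mul_one]

theorem numRadius_nonneg : 0 ≤ numRadius A :=
  Real.sSup_nonneg fun _ ⟨_, _, hr⟩ => hr ▸ norm_nonneg _

theorem numRadius_le_opNorm : numRadius A ≤ ‖A‖ :=
  Real.sSup_le (fun _ ⟨_, hx, hr⟩ => hr ▸ A.norm_inner_apply_self_le_opNorm hx) (norm_nonneg A)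

theorem norm_inner_apply_self_le_numRadius {x : H} (hx : ‖x‖ = 1) :
    ‖(inner ℂ (A x) x : ℂ)‖ ≤ numRadius A :=
  le_csSup ⟨‖A‖, fun _ ⟨_, hy, hr⟩ => hr ▸ A.norm_inner_apply_self_le_opNorm hy⟩ ⟨x, hx, rfl⟩

theorem numRadius_le [Nontrivial H] {c : ℝ} (hc : ∀ x : H, ‖x‖ = 1 → ‖(inner ℂ (A x) x : ℂ)‖ ≤ c) :
    numRadius A ≤ c := by
  obtain ⟨x, hx⟩ := exists_norm_eq H zero_le_one
  exact csSup_le ⟨_, x, hx, rfl⟩ fun _ ⟨y, hy, hr⟩ => hr ▸ hc y hy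

theorem norm_add_smul_one_le {lam : ℂ} (hlam : ‖lam‖ = 1) :
    ‖A + lam • (1 : H →L[ℂ] H)‖ ≤ ‖A‖ + 1 :=
  calc ‖A + lam • (1 : H →L[ℂ] H)‖ ≤ ‖A‖ + ‖lam • (1 : H →L[ℂ] H)‖ := norm_add_le _ _
    _ = ‖A‖ + ‖(1 : H →L[ℂ] H)‖ := by rw [norm_smul, hlam, one_mul]
    _ ≤ ‖A‖ + 1 := by gcongr; exact norm_id_le

theorem norm_add_smul_one_apply_sq_le {lam : ℂ} (hlam : ‖lam‖ = 1) {x : H} (hx : ‖x‖ = 1) :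
    ‖(A + lam • (1 : H →L[ℂ] H)) x‖ ^ 2 ≤ ‖A‖ ^ 2 + 2 * numRadius A + 1 := by
  have hAx : ‖A x‖ ≤ ‖A‖ := by simpa [hx] using A.le_opNorm x
  have hre : RCLike.re (inner ℂ (A x) (lam • x) : ℂ) ≤ numRadius A :=
    calc RCLike.re (inner ℂ (A x) (lam • x) : ℂ) ≤ ‖(inner ℂ (A x) (lam • x) : ℂ)‖ :=
          RCLike.re_le_norm _
      _ = ‖(inner ℂ (A x) x : ℂ)‖ := by rw [inner_smul_right, norm_mul, hlam, one_mul]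
      _ ≤ numRadius A := A.norm_inner_apply_self_le_numRadius hx
  rw [add_apply, smul_apply, one_apply_eq_self, norm_add_sq (𝕜 := ℂ), norm_smul, hlam, hx,
    one_mul]
  nlinarith [norm_nonneg (A x)]

theorem norm_add_smul_one_sq_le {lam : ℂ} (hlam : ‖lam‖ = 1) :
    ‖A + lam • (1 : H →L[ℂ] H)‖ ^ 2 ≤ ‖A‖ ^ 2 + 2 * numRadius A + 1 := by
  have hw := A.numRadius_nonneg
  rw [← Real.le_sqrt (norm_nonneg _) (by positivity)]
  exact opNorm_le_of_unit_norm (Real.sqrt_nonneg _) fun x hx =>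
    Real.le_sqrt_of_sq_le (A.norm_add_smul_one_apply_sq_le hlam hx)

theorem inner_add_smul_one_apply_self (lam : ℂ) {x : H} (hx : ‖x‖ = 1) :
    (inner ℂ ((A + lam • (1 : H →L[ℂ] H)) x) x : ℂ) = inner ℂ (A x) x + conj lam := by
  rw [add_apply, smul_apply, one_apply_eq_self, inner_add_left, inner_smul_left,
    inner_self_eq_norm_sq_to_K, hx]
  simp

theorem exists_norm_inner_apply_self_add_one_le {x : H} (hx : ‖x‖ = 1) :
    ∃ lam : ℂ, ‖lam‖ = 1 ∧ ‖(inner ℂ (A x) x : ℂ)‖ + 1 ≤ ‖A + lam • (1 : H →L[ℂ] H)‖ := by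
  obtain ⟨μ, hμ, hadd⟩ := exists_norm_eq_one_norm_add_eq (inner ℂ (A x) x : ℂ)
  refine ⟨conj μ, by rwa [Complex.norm_conj], ?_⟩
  calc ‖(inner ℂ (A x) x : ℂ)‖ + 1 = ‖(inner ℂ ((A + conj μ • (1 : H →L[ℂ] H)) x) x : ℂ)‖ := by
        rw [inner_add_smul_one_apply_self A _ hx, Complex.conj_conj, hadd]
    _ ≤ ‖A + conj μ • (1 : H →L[ℂ] H)‖ := norm_inner_apply_self_le_opNorm _ hx

theorem exists_numRadius_add_one_le [Nontrivial H] :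
    ∃ lam : ℂ, ‖lam‖ = 1 ∧ numRadius A + 1 ≤ ‖A + lam • (1 : H →L[ℂ] H)‖ := by
  have hcont : Continuous fun lam : ℂ => ‖A + lam • (1 : H →L[ℂ] H)‖ := by fun_prop
  obtain ⟨lam, hlam, hmax⟩ := (isCompact_sphere (0 : ℂ) 1).exists_isMaxOn
    (NormedSpace.sphere_nonempty.2 zero_le_one) hcont.continuousOn
  rw [mem_sphere_zero_iff_norm] at hlam
  refine ⟨lam, hlam, le_sub_iff_add_le.1 (A.numRadius_le fun x hx => ?_)⟩
  obtain ⟨μ, hμ, hle⟩ := A.exists_norm_inner_apply_self_add_one_le hx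
  have hμ_le : ‖A + μ • (1 : H →L[ℂ] H)‖ ≤ ‖A + lam • (1 : H →L[ℂ] H)‖ :=
    hmax (mem_sphere_zero_iff_norm.2 hμ)
  linarith

end ContinuousLinearMap

theorem parallel_to_identity_iff_norm_eq_numericalRadius_general
    {H : Type*} [NormedAddCommGroup H] [InnerProductSpace ℂ H]
    [Nontrivial H] (A : H →L[ℂ] H) :
    (∃ lam : ℂ, ‖lam‖ = 1 ∧ ‖A + lam • (1 : H →L[ℂ] H)‖ = ‖A‖ + 1) ↔
      ‖A‖ = numRadius A := by
  constructor
  · rintro ⟨lam, hlam, hparallel⟩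
    have hsq := A.norm_add_smul_one_sq_le hlam
    rw [hparallel] at hsq
    exact le_antisymm (by nlinarith) A.numRadius_le_opNorm
  · intro hw
    obtain ⟨lam, hlam, hge⟩ := A.exists_numRadius_add_one_le
    exact ⟨lam, hlam, le_antisymm (A.norm_add_smul_one_le hlam) (hw ▸ hge)⟩

theorem parallel_to_identity_iff_norm_eq_numericalRadius
    {H : Type*} [NormedAddCommGroup H] [InnerProductSpace ℂ H]
    [CompleteSpace H] [Nontrivial H] (A : H →L[ℂ] H) :
    (∃ lam : ℂ, ‖lam‖ = 1 ∧ ‖A + lam • (1 : H →L[ℂ] H)‖ = ‖A‖ + 1) ↔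
      ‖A‖ = numRadius A :=
  parallel_to_identity_iff_norm_eq_numericalRadius_general A
end
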